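/- If W1 and W2 are common eigenvectors with equal eigenvalues along a vector ψ (i.e., W1 ψ = λ ψ and W2 ψ = λ ψ for the same λ > 0), then ψ lies in the kernel of the operator F = S^{1/2} log(S^{-1/2} W1 S^{-1/2}) S^{1/2}, where S is the geodesic midpoint of W1 and W2. -/

import Mathlib

/-! A common eigenvector `ψ` of `W1` (eigenvalue `λ`) and `W2` (eigenvalue `ν`) stays an
eigenvector of every matrix built from them by products, inverses and the functional calculus,
since `f(A) ψ = f(μ) ψ` whenever `A ψ = μ ψ`. Following `ψ` through the formulas gives
`S ψ = √(λν) ψ` and `Log_S(W) ψ = λ log(ν/λ) ψ`; for `ν = λ` this is `λ log 1 ψ = 0`. -/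

open Matrix

noncomputable def msqrt {N : ℕ} (A : Matrix (Fin N) (Fin N) ℝ) : Matrix (Fin N) (Fin N) ℝ :=
  cfc Real.sqrt A

noncomputable def mlog {N : ℕ} (A : Matrix (Fin N) (Fin N) ℝ) : Matrix (Fin N) (Fin N) ℝ :=
  cfc Real.log A

noncomputable def mexp {N : ℕ} (A : Matrix (Fin N) (Fin N) ℝ) : Matrix (Fin N) (Fin N) ℝ :=
  cfc Real.exp A

noncomputable def mpow {N : ℕ} (p : ℝ) (A : Matrix (Fin N) (Fin N) ℝ) : Matrix (Fin N) (Fin N) ℝ :=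
  cfc (fun x : ℝ => x ^ p) A

/-- Midpoint of the affine-invariant geodesic between `W1` and `W2`:
`S = W1^{1/2} (W1^{-1/2} W2 W1^{-1/2})^{1/2} W1^{1/2}`. -/
noncomputable def geoMid {N : ℕ} (W1 W2 : Matrix (Fin N) (Fin N) ℝ) : Matrix (Fin N) (Fin N) ℝ :=
  msqrt W1 * msqrt ((msqrt W1)⁻¹ * W2 * (msqrt W1)⁻¹) * msqrt W1

/-- Logarithmic map at `S`: `Log_S(W) = S^{1/2} log(S^{-1/2} W S^{-1/2}) S^{1/2}`. -/
noncomputable def logMap {N : ℕ} (S W : Matrix (Fin N) (Fin N) ℝ) : Matrix (Fin N) (Fin N) ℝ :=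
  msqrt S * mlog ((msqrt S)⁻¹ * W * (msqrt S)⁻¹) * msqrt S

/-- Exponential map at `S`: `Exp_S(D) = S^{1/2} exp(S^{-1/2} D S^{-1/2}) S^{1/2}`. -/
noncomputable def expMap {N : ℕ} (S D : Matrix (Fin N) (Fin N) ℝ) : Matrix (Fin N) (Fin N) ℝ :=
  msqrt S * mexp ((msqrt S)⁻¹ * D * (msqrt S)⁻¹) * msqrt S

section Eigenvector

variable {n : Type*} [Fintype n]

theorem Matrix.mul_mul_mulVec_of_mulVec_eq_smul {R : Type*} [CommSemiring R]
    {P Q T : Matrix n n R} {ψ : n → R} {a b c : R}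
    (hP : P *ᵥ ψ = a • ψ) (hQ : Q *ᵥ ψ = b • ψ) (hT : T *ᵥ ψ = c • ψ) :
    (P * Q * T) *ᵥ ψ = (a * b * c) • ψ := by
  rw [← mulVec_mulVec, ← mulVec_mulVec, hT, mulVec_smul, hQ, mulVec_smul, mulVec_smul, hP,
    smul_smul, smul_smul]
  congr 1
  ring

variable [DecidableEq n]

theorem Matrix.inv_mulVec_of_mulVec_eq_smul {K : Type*} [Field K] {M : Matrix n n K}
    (hM : IsUnit M) {ψ : n → K} {c : K} (h : M *ᵥ ψ = c • ψ) : M⁻¹ *ᵥ ψ = c⁻¹ • ψ := by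
  have hψ : ψ = c • (M⁻¹ *ᵥ ψ) := by
    rw [← mulVec_smul, ← h, mulVec_mulVec, nonsing_inv_mul _ ((isUnit_iff_isUnit_det M).mp hM),
      one_mulVec]
  rcases eq_or_ne c 0 with rfl | hc
  · rw [zero_smul] at hψ
    simp [hψ]
  · calc M⁻¹ *ᵥ ψ = c⁻¹ • (c • (M⁻¹ *ᵥ ψ)) := by rw [smul_smul, inv_mul_cancel₀ hc, one_smul]
      _ = c⁻¹ • ψ := by rw [← hψ]

theorem Matrix.IsHermitian.cfc_mulVec_of_mulVec_eq_smul {𝕜 : Type*} [RCLike 𝕜] {A : Matrix n n 𝕜}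
    (hA : A.IsHermitian) (f : ℝ → ℝ) {ψ : n → 𝕜} {μ : ℝ} (h : A *ᵥ ψ = μ • ψ) :
    cfc f A *ᵥ ψ = f μ • ψ := by
  have hcont (g : ℝ → ℝ) : ContinuousOn g (spectrum ℝ A) := A.finite_real_spectrum.continuousOn g
  set g : ℝ → ℝ := fun x => (f x - f μ) / (x - μ)
  -- `f - f μ` vanishes at `μ`, so it factors through `x - μ` (also at `x = μ`, as `0 / 0 = 0`).
  have hfactor : f = fun x => f μ + g x * (x - μ) := by
    funext x
    rcases eq_or_ne x μ with rfl | hx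
    · simp
    · simp [g, div_mul_cancel₀ _ (sub_ne_zero.mpr hx)]
  have hcfc : cfc f A = algebraMap ℝ _ (f μ) + cfc g A * (A - algebraMap ℝ _ μ) := by
    conv_lhs => rw [hfactor]
    rw [cfc_const_add _ _ _ (hcont _), cfc_mul _ _ _ (hcont _) (hcont _),
      cfc_sub _ _ _ (hcont _) (hcont _), cfc_id' ℝ A, cfc_const μ A]
  have halgebraMap (r : ℝ) (v : n → 𝕜) : algebraMap ℝ (Matrix n n 𝕜) r *ᵥ v = r • v := by
    rw [Algebra.algebraMap_eq_smul_one, smul_mulVec, one_mulVec]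
  rw [hcfc, add_mulVec, ← mulVec_mulVec, sub_mulVec, h, halgebraMap, halgebraMap, sub_self,
    mulVec_zero, add_zero]

theorem Matrix.PosDef.mul_mul_same {R : Type*} [Ring R] [PartialOrder R] [StarRing R]
    {P W : Matrix n n R} (hW : W.PosDef) (hP : P.IsHermitian) (hPu : IsUnit P) :
    (P * W * P).PosDef := by
  have h := hPu.posDef_star_left_conjugate_iff.mpr hW
  rwa [star_eq_conjTranspose, hP.eq] at h

end Eigenvector

section GeometricMean

variable {N : ℕ}

open scoped MatrixOrder in
theorem msqrt_posDef {A : Matrix (Fin N) (Fin N) ℝ} (hA : A.PosDef) : (msqrt A).PosDef := by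
  have hspec := (StarOrderedRing.isStrictlyPositive_iff_spectrum_pos (R := ℝ) A hA.1).mp
    hA.isStrictlyPositive
  exact ((cfc_isStrictlyPositive_iff Real.sqrt A).mpr fun x hx =>
    Real.sqrt_pos.mpr (hspec x hx)).posDef

theorem inv_msqrt_mul_mul_inv_msqrt_posDef {S W : Matrix (Fin N) (Fin N) ℝ} (hS : S.PosDef)
    (hW : W.PosDef) : ((msqrt S)⁻¹ * W * (msqrt S)⁻¹).PosDef :=
  hW.mul_mul_same (msqrt_posDef hS).inv.1 (msqrt_posDef hS).inv.isUnit

theorem geoMid_posDef {W1 W2 : Matrix (Fin N) (Fin N) ℝ} (hW1 : W1.PosDef) (hW2 : W2.PosDef) :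
    (geoMid W1 W2).PosDef :=
  (msqrt_posDef (inv_msqrt_mul_mul_inv_msqrt_posDef hW1 hW2)).mul_mul_same
    (msqrt_posDef hW1).1 (msqrt_posDef hW1).isUnit

variable {S W : Matrix (Fin N) (Fin N) ℝ} {ψ : Fin N → ℝ} {lam ν : ℝ}

theorem inv_msqrt_mul_mul_inv_msqrt_mulVec (hS : S.PosDef) (hSψ : S *ᵥ ψ = lam • ψ)
    (hWψ : W *ᵥ ψ = ν • ψ) (hlam : 0 ≤ lam) :
    ((msqrt S)⁻¹ * W * (msqrt S)⁻¹) *ᵥ ψ = (ν / lam) • ψ := by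
  have hsqrt : msqrt S *ᵥ ψ = √lam • ψ := hS.1.cfc_mulVec_of_mulVec_eq_smul Real.sqrt hSψ
  have hinv := inv_mulVec_of_mulVec_eq_smul (msqrt_posDef hS).isUnit hsqrt
  rw [mul_mul_mulVec_of_mulVec_eq_smul hinv hWψ hinv]
  congr 1
  conv_rhs => rw [← Real.mul_self_sqrt hlam]
  ring

theorem geoMid_mulVec {W1 W2 : Matrix (Fin N) (Fin N) ℝ} (hW1 : W1.PosDef) (hW2 : W2.PosDef)
    (h1 : W1 *ᵥ ψ = lam • ψ) (h2 : W2 *ᵥ ψ = ν • ψ) (hlam : 0 ≤ lam) :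
    geoMid W1 W2 *ᵥ ψ = √(lam * ν) • ψ := by
  have hsqrt : msqrt W1 *ᵥ ψ = √lam • ψ := hW1.1.cfc_mulVec_of_mulVec_eq_smul Real.sqrt h1
  have hmid : msqrt ((msqrt W1)⁻¹ * W2 * (msqrt W1)⁻¹) *ᵥ ψ = √(ν / lam) • ψ :=
    (inv_msqrt_mul_mul_inv_msqrt_posDef hW1 hW2).1.cfc_mulVec_of_mulVec_eq_smul Real.sqrt
      (inv_msqrt_mul_mul_inv_msqrt_mulVec hW1 h1 h2 hlam)
  rw [geoMid, mul_mul_mulVec_of_mulVec_eq_smul hsqrt hmid hsqrt]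
  congr 1
  calc √lam * √(ν / lam) * √lam = √(lam * lam) * √(ν / lam) := by
        rw [Real.sqrt_mul_self hlam]
        linear_combination √(ν / lam) * Real.mul_self_sqrt hlam
    _ = √(lam * lam * (ν / lam)) := (Real.sqrt_mul (mul_self_nonneg lam) _).symm
    _ = √(lam * ν) := by
        rcases eq_or_ne lam 0 with rfl | hlam0
        · simp
        · field_simp

theorem logMap_mulVec (hS : S.PosDef) (hW : W.PosDef) (hSψ : S *ᵥ ψ = lam • ψ)
    (hWψ : W *ᵥ ψ = ν • ψ) (hlam : 0 ≤ lam) :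
    logMap S W *ᵥ ψ = (lam * Real.log (ν / lam)) • ψ := by
  have hsqrt : msqrt S *ᵥ ψ = √lam • ψ := hS.1.cfc_mulVec_of_mulVec_eq_smul Real.sqrt hSψ
  have hlog : mlog ((msqrt S)⁻¹ * W * (msqrt S)⁻¹) *ᵥ ψ = Real.log (ν / lam) • ψ :=
    (inv_msqrt_mul_mul_inv_msqrt_posDef hS hW).1.cfc_mulVec_of_mulVec_eq_smul Real.log
      (inv_msqrt_mul_mul_inv_msqrt_mulVec hS hSψ hWψ hlam)
  rw [logMap, mul_mul_mulVec_of_mulVec_eq_smul hsqrt hlog hsqrt]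
  congr 1
  linear_combination Real.log (ν / lam) * Real.mul_self_sqrt hlam

end GeometricMean

theorem stmt_2_general {N : ℕ} (W1 W2 : Matrix (Fin N) (Fin N) ℝ)
    (hW1 : W1.PosDef) (hW2 : W2.PosDef)
    (ψ : Fin N → ℝ) (lam : ℝ) (hlam : 0 < lam)
    (h1 : W1 *ᵥ ψ = lam • ψ) (h2 : W2 *ᵥ ψ = lam • ψ) :
    logMap (geoMid W1 W2) W1 *ᵥ ψ = 0 := by
  have hS : geoMid W1 W2 *ᵥ ψ = lam • ψ := by
    rw [geoMid_mulVec hW1 hW2 h1 h2 hlam.le, Real.sqrt_mul_self hlam.le]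
  rw [logMap_mulVec (geoMid_posDef hW1 hW2) hW1 hS h1 hlam.le, div_self hlam.ne', Real.log_one,
    mul_zero, zero_smul]

/-- a common eigenvector of W1 and W2 with equal eigenvalue λ > 0 lies in the
kernel of F = Log_S(W1), where S is the geodesic midpoint of W1 and W2. -/
theorem stmt_2 {N : ℕ} (W1 W2 : Matrix (Fin N) (Fin N) ℝ)
    (hW1 : W1.PosDef) (hW2 : W2.PosDef)
    (ψ : Fin N → ℝ) (hψ : ψ ≠ 0) (lam : ℝ) (hlam : 0 < lam)
    (h1 : W1 *ᵥ ψ = lam • ψ) (h2 : W2 *ᵥ ψ = lam • ψ) :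
    logMap (geoMid W1 W2) W1 *ᵥ ψ = 0 :=
  stmt_2_general W1 W2 hW1 hW2 ψ lam hlam h1 h2
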